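/- arXiv:2003.00037 — 7 statements merged into one kernel-verified Lean document; each statement's English description precedes it below -/
import Mathlib

section
/- No nilpotent group can act faithfully and doubly transitively on a set X with more than two elements. -/
/-! A central element `z` commutes with every stabilizer `Stab(p)`, so `Stab(p)` fixes `z • p`.
Under double transitivity `Stab(p)` moves `z • p` to any third point unless `z • p = p`; with
three points available, every central element therefore acts trivially. Faithfulness makes the
center trivial, and a nilpotent group with trivial center is trivial, which cannot act
transitively on two distinct points. -/

lemma exists_ne_ne_of_three_distinct {X : Type*} {a b c : X} (hab : a ≠ b) (hac : a ≠ c)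
    (hbc : b ≠ c) (p q : X) : ∃ r, r ≠ p ∧ r ≠ q := by
  by_contra! h
  rcases eq_or_ne a p with rfl | hap
  · exact hbc ((h b hab.symm).trans (h c hac.symm).symm)
  rcases eq_or_ne b p with rfl | hbp
  · exact hac ((h a hab).trans (h c hbc.symm).symm)
  exact hab ((h a hap).trans (h b hbp).symm)

section DoublyTransitive

variable {G X : Type*} [Group G] [MulAction G X]

lemma smul_eq_self_of_mem_center
    (hdt : ∀ x₁ x₂ y₁ y₂ : X, x₁ ≠ x₂ → y₁ ≠ y₂ → ∃ g : G, g • x₁ = y₁ ∧ g • x₂ = y₂)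
    (hcard : ∃ a b c : X, a ≠ b ∧ a ≠ c ∧ b ≠ c) {z : G} (hz : z ∈ Subgroup.center G)
    (p : X) : z • p = p := by
  by_contra hzp
  obtain ⟨a, b, c, hab, hac, hbc⟩ := hcard
  obtain ⟨r, hrp, hrz⟩ := exists_ne_ne_of_three_distinct hab hac hbc p (z • p)
  obtain ⟨g, hgp, hgz⟩ := hdt p (z • p) p r (Ne.symm hzp) (Ne.symm hrp)
  have hcomm : z • g • p = g • z • p := by
    rw [smul_smul, smul_smul, (Subgroup.mem_center_iff.mp hz g).symm]
  rw [hgp, hgz] at hcomm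
  exact hrz hcomm.symm

lemma center_eq_bot_of_doublyTransitive [FaithfulSMul G X]
    (hdt : ∀ x₁ x₂ y₁ y₂ : X, x₁ ≠ x₂ → y₁ ≠ y₂ → ∃ g : G, g • x₁ = y₁ ∧ g • x₂ = y₂)
    (hcard : ∃ a b c : X, a ≠ b ∧ a ≠ c ∧ b ≠ c) : Subgroup.center G = ⊥ :=
  (Subgroup.eq_bot_iff_forall _).mpr fun _ hz =>
    eq_of_smul_eq_smul fun p : X => by rw [smul_eq_self_of_mem_center hdt hcard hz, one_smul]

end DoublyTransitive

/-- No nilpotent group acts faithfully and doubly transitively on a set with more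
than two elements. -/
theorem stmt_3 {G X : Type*} [Group G] [MulAction G X] [FaithfulSMul G X]
    (hnil : Group.IsNilpotent G)
    (hdt : ∀ x₁ x₂ y₁ y₂ : X, x₁ ≠ x₂ → y₁ ≠ y₂ → ∃ g : G, g • x₁ = y₁ ∧ g • x₂ = y₂)
    (hcard : ∃ a b c : X, a ≠ b ∧ a ≠ c ∧ b ≠ c) :
    False := by
  have hcenter := center_eq_bot_of_doublyTransitive hdt hcard
  have : Subsingleton G := by
    by_contra hG
    rw [not_subsingleton_iff_nontrivial] at hG
    exact Group.IsNilpotent.center_ne_bot G hcenter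
  obtain ⟨a, b, -, hab, -, -⟩ := hcard
  obtain ⟨g, hga, -⟩ := hdt a b b a hab hab.symm
  rw [Subsingleton.elim g 1, one_smul] at hga
  exact hab hga
end

section
/- The matrices A = [[1,2],[0,1]] and B = [[1,0],[2,1]] generate a free subgroup of rank 2 in SL_2(ℤ). -/
/-- The matrix `[[1,2],[0,1]]` in `SL₂(ℤ)`. -/
noncomputable def sanovA : Matrix.SpecialLinearGroup (Fin 2) ℤ :=
  ⟨!![1, 2; 0, 1], by simp [Matrix.det_fin_two_of]⟩

/-- The matrix `[[1,0],[2,1]]` in `SL₂(ℤ)`. -/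
noncomputable def sanovB : Matrix.SpecialLinearGroup (Fin 2) ℤ :=
  ⟨!![1, 0; 2, 1], by simp [Matrix.det_fin_two_of]⟩

namespace SanovAux

abbrev SL2 := Matrix.SpecialLinearGroup (Fin 2) ℤ

/-- Nonzero integer vectors in the plane. -/
def V : Type := {v : Fin 2 → ℤ // v ≠ 0}

noncomputable instance : MulAction SL2 V where
  smul g v := ⟨g.1.mulVec v.1, by
    intro h
    apply v.2
    have key : (g⁻¹).1.mulVec (g.1.mulVec v.1) = v.1 := by
      rw [Matrix.mulVec_mulVec, ← Matrix.SpecialLinearGroup.coe_mul, inv_mul_cancel,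
        Matrix.SpecialLinearGroup.coe_one, Matrix.one_mulVec]
    rw [h, Matrix.mulVec_zero] at key
    exact key.symm⟩
  one_smul v := Subtype.ext (by
    show (1 : SL2).1.mulVec v.1 = v.1
    rw [Matrix.SpecialLinearGroup.coe_one, Matrix.one_mulVec])
  mul_smul g h v := Subtype.ext (by
    show (g * h).1.mulVec v.1 = g.1.mulVec (h.1.mulVec v.1)
    rw [Matrix.mulVec_mulVec, Matrix.SpecialLinearGroup.coe_mul])

lemma smul_coe (g : SL2) (v : V) : (g • v).1 = g.1.mulVec v.1 := rfl

/-- Same-sign predicate. -/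
def P (x y : ℤ) : Prop := (0 < x ∧ 0 < y) ∨ (x < 0 ∧ y < 0)

/-- Opposite-sign predicate. -/
def N (x y : ℤ) : Prop := (0 < x ∧ y < 0) ∨ (x < 0 ∧ 0 < y)

def X0 : Set V := {v | P (v.1 0) (v.1 1) ∧ (v.1 1).natAbs ≤ (v.1 0).natAbs}
def Y0 : Set V := {v | (N (v.1 0) (v.1 1) ∧ (v.1 1).natAbs < (v.1 0).natAbs) ∨ v.1 1 = 0}
def X1 : Set V := {v | P (v.1 0) (v.1 1) ∧ (v.1 0).natAbs < (v.1 1).natAbs}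
def Y1 : Set V := {v | (N (v.1 0) (v.1 1) ∧ (v.1 0).natAbs ≤ (v.1 1).natAbs) ∨ v.1 0 = 0}

lemma ne_zero_coords (v : V) : ¬(v.1 0 = 0 ∧ v.1 1 = 0) := by
  rintro ⟨h0, h1⟩
  apply v.2
  funext i
  fin_cases i <;> assumption

lemma mulVec_A (v : Fin 2 → ℤ) :
    (!![1, 2; 0, 1] : Matrix (Fin 2) (Fin 2) ℤ).mulVec v = ![v 0 + 2 * v 1, v 1] := by
  funext i
  fin_cases i <;>
    simp [Matrix.mulVec, dotProduct, Fin.sum_univ_two] <;> ring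

lemma mulVec_A' (v : Fin 2 → ℤ) :
    (!![1, -2; 0, 1] : Matrix (Fin 2) (Fin 2) ℤ).mulVec v = ![v 0 - 2 * v 1, v 1] := by
  funext i
  fin_cases i <;>
    simp [Matrix.mulVec, dotProduct, Fin.sum_univ_two] <;> ring

lemma mulVec_B (v : Fin 2 → ℤ) :
    (!![1, 0; 2, 1] : Matrix (Fin 2) (Fin 2) ℤ).mulVec v = ![v 0, 2 * v 0 + v 1] := by
  funext i
  fin_cases i <;>
    simp [Matrix.mulVec, dotProduct, Fin.sum_univ_two] <;> ring

lemma mulVec_B' (v : Fin 2 → ℤ) :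
    (!![1, 0; -2, 1] : Matrix (Fin 2) (Fin 2) ℤ).mulVec v = ![v 0, v 1 - 2 * v 0] := by
  funext i
  fin_cases i <;>
    simp [Matrix.mulVec, dotProduct, Fin.sum_univ_two] <;> ring

lemma coe_inv_A : ((sanovA⁻¹ : SL2) : Matrix (Fin 2) (Fin 2) ℤ) = !![1, -2; 0, 1] := by
  rw [Matrix.SpecialLinearGroup.coe_inv]
  show (!![1, 2; 0, 1] : Matrix (Fin 2) (Fin 2) ℤ).adjugate = _
  rw [Matrix.adjugate_fin_two_of]
  norm_num

lemma coe_inv_B : ((sanovB⁻¹ : SL2) : Matrix (Fin 2) (Fin 2) ℤ) = !![1, 0; -2, 1] := by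
  rw [Matrix.SpecialLinearGroup.coe_inv]
  show (!![1, 0; 2, 1] : Matrix (Fin 2) (Fin 2) ℤ).adjugate = _
  rw [Matrix.adjugate_fin_two_of]
  norm_num

end SanovAux

open SanovAux in
/-- Sanov's theorem: the matrices `[[1,2],[0,1]]` and `[[1,0],[2,1]]` generate a
free subgroup of rank 2 in `SL₂(ℤ)`. -/
theorem stmt_7 :
    Function.Injective (FreeGroup.lift (fun i : Fin 2 => if i = 0 then sanovA else sanovB)) := by
  set a : Fin 2 → SL2 := fun i => if i = 0 then sanovA else sanovB with ha
  apply FreeGroup.injective_lift_of_ping_pong a ![X0, X1] ![Y0, Y1]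
  · -- nonempty
    intro i
    fin_cases i
    · exact ⟨⟨![1, 1], by intro h; simpa using congrFun h 0⟩, by
        refine ⟨Or.inl ⟨by norm_num, by norm_num⟩, by norm_num⟩⟩
    · exact ⟨⟨![1, 2], by intro h; simpa using congrFun h 0⟩, by
        refine ⟨Or.inl ⟨by norm_num, by norm_num⟩, by norm_num⟩⟩
  · -- X pairwise disjoint
    have key : Disjoint X0 X1 := by
      rw [Set.disjoint_left]
      rintro v ⟨_, h1⟩ ⟨_, h2⟩
      omega
    intro i j hij
    fin_cases i <;> fin_cases j <;>
      first
        | exact absurd rfl hij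
        | exact key
        | exact key.symm
  · -- Y pairwise disjoint
    have key : Disjoint Y0 Y1 := by
      rw [Set.disjoint_left]
      rintro v h1 h2
      have := ne_zero_coords v
      simp only [Y0, Y1, Set.mem_setOf_eq, N] at h1 h2
      omega
    intro i j hij
    fin_cases i <;> fin_cases j <;>
      first
        | exact absurd rfl hij
        | exact key
        | exact key.symm
  · -- X disjoint from Y
    have k00 : Disjoint X0 Y0 := by
      rw [Set.disjoint_left]
      rintro v h1 h2
      have := ne_zero_coords v
      simp only [X0, Y0, Set.mem_setOf_eq, P, N] at h1 h2
      omega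
    have k01 : Disjoint X0 Y1 := by
      rw [Set.disjoint_left]
      rintro v h1 h2
      have := ne_zero_coords v
      simp only [X0, Y1, Set.mem_setOf_eq, P, N] at h1 h2
      omega
    have k10 : Disjoint X1 Y0 := by
      rw [Set.disjoint_left]
      rintro v h1 h2
      have := ne_zero_coords v
      simp only [X1, Y0, Set.mem_setOf_eq, P, N] at h1 h2
      omega
    have k11 : Disjoint X1 Y1 := by
      rw [Set.disjoint_left]
      rintro v h1 h2
      have := ne_zero_coords v
      simp only [X1, Y1, Set.mem_setOf_eq, P, N] at h1 h2
      omega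
    intro i j
    fin_cases i <;> fin_cases j <;> assumption
  · -- a i • (Y i)ᶜ ⊆ X i
    intro i
    rintro _ ⟨v, hv, rfl⟩
    simp only [Set.mem_compl_iff] at hv
    fin_cases i
    · replace hv : v ∉ Y0 := hv
      show sanovA • v ∈ X0
      have hmem : (sanovA • v).1 = ![v.1 0 + 2 * v.1 1, v.1 1] := mulVec_A v.1
      simp only [Y0, Set.mem_setOf_eq, N] at hv
      simp only [X0, Set.mem_setOf_eq, P, hmem]
      simp only [Matrix.cons_val_zero, Matrix.cons_val_one, Matrix.head_cons]
      have := ne_zero_coords v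
      push_neg at hv
      rcases hv with ⟨h1, h2⟩
      rcases lt_trichotomy (v.1 1) 0 with hy | hy | hy
      · rcases lt_trichotomy (v.1 0) 0 with hx | hx | hx <;> constructor <;> omega
      · exact absurd hy h2
      · rcases lt_trichotomy (v.1 0) 0 with hx | hx | hx <;> constructor <;> omega
    · replace hv : v ∉ Y1 := hv
      show sanovB • v ∈ X1
      have hmem : (sanovB • v).1 = ![v.1 0, 2 * v.1 0 + v.1 1] := mulVec_B v.1
      simp only [Y1, Set.mem_setOf_eq, N] at hv
      simp only [X1, Set.mem_setOf_eq, P, hmem]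
      simp only [Matrix.cons_val_zero, Matrix.cons_val_one, Matrix.head_cons]
      have := ne_zero_coords v
      push_neg at hv
      rcases hv with ⟨h1, h2⟩
      rcases lt_trichotomy (v.1 0) 0 with hx | hx | hx
      · rcases lt_trichotomy (v.1 1) 0 with hy | hy | hy <;> constructor <;> omega
      · exact absurd hx h2
      · rcases lt_trichotomy (v.1 1) 0 with hy | hy | hy <;> constructor <;> omega
  · -- a⁻¹ i • (X i)ᶜ ⊆ Y i
    intro i
    rintro _ ⟨v, hv, rfl⟩
    simp only [Set.mem_compl_iff] at hv
    fin_cases i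
    · replace hv : v ∉ X0 := hv
      show sanovA⁻¹ • v ∈ Y0
      have hmem : (sanovA⁻¹ • v).1 = ![v.1 0 - 2 * v.1 1, v.1 1] := by
        rw [smul_coe, coe_inv_A]
        exact mulVec_A' v.1
      simp only [X0, Set.mem_setOf_eq, P] at hv
      simp only [Y0, Set.mem_setOf_eq, N, hmem]
      simp only [Matrix.cons_val_zero, Matrix.cons_val_one, Matrix.head_cons]
      have := ne_zero_coords v
      push_neg at hv
      rcases eq_or_ne (v.1 1) 0 with hy | hy
      · right; exact hy
      · left
        rcases lt_trichotomy (v.1 1) 0 with hy' | hy' | hy'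
        · rcases lt_trichotomy (v.1 0) 0 with hx | hx | hx <;> constructor <;> omega
        · exact absurd hy' hy
        · rcases lt_trichotomy (v.1 0) 0 with hx | hx | hx <;> constructor <;> omega
    · replace hv : v ∉ X1 := hv
      show sanovB⁻¹ • v ∈ Y1
      have hmem : (sanovB⁻¹ • v).1 = ![v.1 0, v.1 1 - 2 * v.1 0] := by
        rw [smul_coe, coe_inv_B]
        exact mulVec_B' v.1
      simp only [X1, Set.mem_setOf_eq, P] at hv
      simp only [Y1, Set.mem_setOf_eq, N, hmem]
      simp only [Matrix.cons_val_zero, Matrix.cons_val_one, Matrix.head_cons]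
      have := ne_zero_coords v
      push_neg at hv
      rcases eq_or_ne (v.1 0) 0 with hx | hx
      · right; exact hx
      · left
        rcases lt_trichotomy (v.1 0) 0 with hx' | hx' | hx'
        · rcases lt_trichotomy (v.1 1) 0 with hy | hy | hy <;> constructor <;> omega
        · exact absurd hx' hx
        · rcases lt_trichotomy (v.1 1) 0 with hy | hy | hy <;> constructor <;> omega
end

section
/- Let k be a field of characteristic zero and c, d ≥ 2 integers. In the group of k-algebra automorphisms of k[x,y], let u_s be the automorphism fixing y and sending x to x + s·y^c, and v_t the automorphism fixing x and sending y to y + t·x^d, for s, t ∈ k. Then for any nonzero s, t ∈ k, the subgroup generated by u_s and v_t is free of rank 2. -/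
/-!
Ping-pong on degrees. Record an automorphism `φ` of `k[x,y]` by the pair `(φ⁻¹ x, φ⁻¹ y)`.
Left multiplication by `u ^ n` turns a pair `(P, Q)` into `(P - n s Q ^ c, Q)`. If `Q` is
nonconstant and `deg P ≤ deg Q`, the new first entry has degree `c · deg Q > deg Q`, because
`c ≥ 2` and `n s ≠ 0` in characteristic zero. So every nontrivial power of `u` moves the pairs
whose second entry dominates to pairs whose first entry dominates, and symmetrically for `v`.
The ping-pong lemma for free products of infinite cyclic groups then gives freeness.
-/

open MvPolynomial
open scoped Pointwise

open Monoid Cardinal in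
theorem FreeGroup.injective_lift_of_ping_pong_zpow {ι G α : Type*} [Nontrivial ι] [Group G]
    [MulAction G α] (a : ι → G) (X : ι → Set α) (hXnonempty : ∀ i, (X i).Nonempty)
    (hXdisj : Pairwise fun i j => Disjoint (X i) (X j))
    (hpp : Pairwise fun i j => ∀ n : ℤ, n ≠ 0 → a i ^ n • X j ⊆ X i) :
    Function.Injective (FreeGroup.lift a) := by
  have hlift : FreeGroup.lift a = (CoprodI.lift fun i => FreeGroup.lift fun _ : Unit => a i).comp
      freeGroupEquivCoprodI.toMonoidHom := by
    ext i; simp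
  rw [hlift, MonoidHom.coe_comp]
  refine .comp (CoprodI.lift_injective_of_ping_pong _ ?_ X hXnonempty hXdisj ?_)
    freeGroupEquivCoprodI.injective
  · right
    refine ⟨Classical.arbitrary ι, ?_⟩
    rw [freeGroupUnitEquivInt.cardinal_eq, mk_denumerable]
    exact natCast_le_aleph0
  · intro i j hij
    refine freeGroupUnitEquivInt.forall_congr_left.mpr fun n hn => ?_
    change FreeGroup.lift (fun _ => a i) (of () ^ n) • X j ⊆ X i
    rw [map_zpow, lift_apply_of]
    exact hpp hij n (by rintro rfl; exact hn rfl)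

theorem AlgEquiv.zpow_apply_of_apply_eq_add {R A : Type*} [CommSemiring R] [Ring A]
    [Algebra R A] (u : A ≃ₐ[R] A) {a b : A} (ha : u a = a + b) (hb : u b = b) (n : ℤ) :
    (u ^ n) a = a + n • b := by
  have hfix : ∀ m : ℤ, (u ^ m) b = b := fun m =>
    MulAction.mem_fixedBy_zpow (α := A) (g := u) hb m
  induction n using Int.induction_on with
  | zero => simp
  | succ m ih =>
    rw [zpow_add_one, mul_apply, ha, map_add, ih, hfix, add_zsmul, one_zsmul, add_assoc]
  | pred m ih =>
    have hinv : u⁻¹ a = a - b :=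
      u.symm_apply_eq.mpr (by rw [map_sub, ha, hb, add_sub_cancel_right])
    rw [zpow_sub_one, mul_apply, hinv, map_sub, ih, hfix, sub_zsmul, one_zsmul]
    abel

namespace MvPolynomial

variable {σ R : Type*} [CommRing R]

def invDegreeGtSet (i j : σ) : Set (MvPolynomial σ R ≃ₐ[R] MvPolynomial σ R) :=
  {φ | (φ⁻¹ (X j)).totalDegree < (φ⁻¹ (X i)).totalDegree}

theorem disjoint_invDegreeGtSet (i j : σ) :
    Disjoint (invDegreeGtSet (R := R) i j) (invDegreeGtSet j i) :=
  Set.disjoint_left.mpr fun _ h₁ h₂ => lt_asymm (α := ℕ) h₁ h₂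

variable [IsDomain R]

theorem totalDegree_pow_of_isDomain {q : MvPolynomial σ R} (hq : q ≠ 0) (n : ℕ) :
    (q ^ n).totalDegree = n * q.totalDegree := by
  induction n with
  | zero => simp
  | succ n ih => rw [pow_succ, totalDegree_mul_of_isDomain (pow_ne_zero n hq) hq, ih, Nat.succ_mul]

theorem totalDegree_add_C_mul_pow {p q : MvPolynomial σ R} {e : R} (he : e ≠ 0) {n : ℕ}
    (h : p.totalDegree < n * q.totalDegree) :
    (p + C e * q ^ n).totalDegree = n * q.totalDegree := by
  have hq : q ≠ 0 := by rintro rfl; simp at h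
  have hlead : (C e * q ^ n).totalDegree = n * q.totalDegree := by
    rw [totalDegree_mul_of_isDomain (C_ne_zero.mpr he) (pow_ne_zero n hq), totalDegree_C,
      totalDegree_pow_of_isDomain hq, zero_add]
  rw [totalDegree_add_eq_right_of_totalDegree_lt (hlead ▸ h), hlead]

variable [CharZero R] {u : MvPolynomial σ R ≃ₐ[R] MvPolynomial σ R} {i j : σ}
  {s : R} {c : ℕ}

theorem totalDegree_mul_zpow_apply_X_lt (hs : s ≠ 0) (hc : 2 ≤ c)
    (hui : u (X i) = X i + C s * X j ^ c) (huj : u (X j) = X j)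
    {ψ : MvPolynomial σ R ≃ₐ[R] MvPolynomial σ R}
    (hle : (ψ (X i)).totalDegree ≤ (ψ (X j)).totalDegree) (hpos : 0 < (ψ (X j)).totalDegree)
    {n : ℤ} (hn : n ≠ 0) :
    ((ψ * u ^ n) (X j)).totalDegree < ((ψ * u ^ n) (X i)).totalDegree := by
  have hfix : (u ^ n) (X j) = X j :=
    MulAction.mem_fixedBy_zpow (α := MvPolynomial σ R) (g := u) huj n
  have hCs : u (C s * X j ^ c) = C s * X j ^ c := by
    rw [map_mul, map_pow, huj, ← algebraMap_eq, u.commutes]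
  have hpow : (u ^ n) (X i) = X i + C (n * s) * X j ^ c := by
    rw [u.zpow_apply_of_apply_eq_add hui hCs n]
    simp [zsmul_eq_mul, mul_assoc]
  have hlt : (ψ (X j)).totalDegree < c * (ψ (X j)).totalDegree :=
    lt_mul_left hpos (by omega)
  have hψC : ψ (C (n * s)) = C (n * s) := ψ.commutes _
  rw [AlgEquiv.mul_apply, AlgEquiv.mul_apply, hfix, hpow, map_add, map_mul, map_pow, hψC,
    totalDegree_add_C_mul_pow (mul_ne_zero (Int.cast_ne_zero.mpr hn) hs) (hle.trans_lt hlt)]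
  exact hlt

theorem zpow_smul_invDegreeGtSet_subset (hs : s ≠ 0) (hc : 2 ≤ c)
    (hui : u (X i) = X i + C s * X j ^ c) (huj : u (X j) = X j) {n : ℤ} (hn : n ≠ 0) :
    u ^ n • invDegreeGtSet (R := R) j i ⊆ invDegreeGtSet i j := by
  refine Set.smul_set_subset_iff.mpr fun φ hφ => ?_
  have := totalDegree_mul_zpow_apply_X_lt hs hc hui huj (ψ := φ⁻¹) hφ.le
    (Nat.zero_lt_of_lt hφ) (neg_ne_zero.mpr hn)
  rwa [zpow_neg, ← mul_inv_rev] at this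

theorem inv_mem_invDegreeGtSet (hs : s ≠ 0) (hc : 2 ≤ c)
    (hui : u (X i) = X i + C s * X j ^ c) (huj : u (X j) = X j) :
    u⁻¹ ∈ invDegreeGtSet i j := by
  have := totalDegree_mul_zpow_apply_X_lt hs hc hui huj (ψ := 1) (by simp) (by simp) one_ne_zero
  change ((u⁻¹)⁻¹ (X j)).totalDegree < ((u⁻¹)⁻¹ (X i)).totalDegree
  rw [inv_inv]
  simpa using this

end MvPolynomial

/-- Let `k` be a field of characteristic zero and `c, d ≥ 2`. The automorphisms
`u : x ↦ x + s·y^c, y ↦ y` and `v : x ↦ x, y ↦ y + t·x^d` of `k[x,y]`, for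
nonzero `s, t ∈ k`, generate a free subgroup of rank 2 of the automorphism group. -/
theorem stmt_8 {k : Type*} [Field k] [CharZero k] (c d : ℕ) (hc : 2 ≤ c) (hd : 2 ≤ d)
    (s t : k) (hs : s ≠ 0) (ht : t ≠ 0)
    (u v : MvPolynomial (Fin 2) k ≃ₐ[k] MvPolynomial (Fin 2) k)
    (hux : u (X 0) = X 0 + C s * (X 1) ^ c) (huy : u (X 1) = X 1)
    (hvx : v (X 0) = X 0) (hvy : v (X 1) = X 1 + C t * (X 0) ^ d) :
    Function.Injective (FreeGroup.lift (fun i : Fin 2 => if i = 0 then u else v)) := by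
  refine FreeGroup.injective_lift_of_ping_pong_zpow _
    ![invDegreeGtSet (σ := Fin 2) (R := k) 0 1, invDegreeGtSet 1 0] ?_ ?_ ?_
  · intro i
    fin_cases i
    · exact ⟨u⁻¹, inv_mem_invDegreeGtSet hs hc hux huy⟩
    · exact ⟨v⁻¹, inv_mem_invDegreeGtSet ht hd hvy hvx⟩
  · intro i j hij
    fin_cases i <;> fin_cases j
    · exact absurd rfl hij
    · exact disjoint_invDegreeGtSet 0 1
    · exact disjoint_invDegreeGtSet 1 0
    · exact absurd rfl hij
  · intro i j hij n hn
    fin_cases i <;> fin_cases j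
    · exact absurd rfl hij
    · exact zpow_smul_invDegreeGtSet_subset hs hc hux huy hn
    · exact zpow_smul_invDegreeGtSet_subset ht hd hvy hvx hn
    · exact absurd rfl hij
end

section
/- Let k be a field of characteristic zero and consider the derivations ∂_1 = y^c ∂/∂x and ∂_2 = x^d ∂/∂y of k[x,y] with integers c ≥ 1 and d > 1. Then the Lie algebra of derivations generated by ∂_1 and ∂_2 is infinite dimensional; in particular, ad(∂_1)^{d+1}(∂_2) = -c(d+1)!·y^e ∂/∂x where e = (d+1)c − 1 > c. -/
/-!
For `F = y^m ∂ₓ` and `G = x^d ∂_y`, induction on `j` gives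
`ad(F)^j G = (d)ⱼ x^(d-j) y^(jm) ∂_y - j m (d)ⱼ₋₁ x^(d-j+1) y^(jm-1) ∂ₓ`, with `(d)ⱼ` the
falling factorial.
At `j = d + 1` the `∂_y` part vanishes, so `ad(F)^(d+1) G` is a nonzero multiple of
`y^((d+1)m-1) ∂ₓ`: a derivation of the same shape as `F`, with a larger exponent once `d ≥ 2`.
Iterating, the Lie algebra generated by `F` and `G` contains derivations sending `x` to `y^m`
for arbitrarily large `m`, whereas total degrees are bounded on a finite-dimensional space of
polynomials.
-/

open MvPolynomial

section
variable {R A : Type*} [CommRing R] [CommRing A] [Algebra R A] {F G : Derivation R A A} {x y : A}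
  {m d : ℕ}

theorem Derivation.map_pow_succ_mul_pow (hFx : F x = y ^ m) (hFy : F y = 0) (a b : ℕ) :
    F (x ^ (a + 1) * y ^ b) = (a + 1) • (x ^ a * y ^ (b + m)) := by
  rw [leibniz, leibniz_pow, leibniz_pow, hFx, hFy]
  simp only [smul_eq_mul, nsmul_eq_mul, add_tsub_cancel_right]
  push_cast
  ring

-- Writing `d = i + j` keeps truncated subtraction out of the exponent of `x`.
theorem Derivation.iterate_lie_apply (hFx : F x = y ^ m) (hFy : F y = 0) (hGx : G x = 0)
    (hGy : G y = x ^ d) {i j : ℕ} (hij : i + j = d) :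
    ((fun D => ⁅F, D⁆)^[j] G) y = d.descFactorial j • (x ^ i * y ^ (j * m)) ∧
    ((fun D => ⁅F, D⁆)^[j + 1] G) x
      = -(((j + 1) * m * d.descFactorial j) • (x ^ i * y ^ (j * m + (m - 1)))) := by
  induction j generalizing i with
  | zero =>
    obtain rfl : i = d := hij
    simp [commutator_apply, hFx, hGx, hGy, leibniz_pow, mul_comm]
  | succ j ih =>
    obtain ⟨hy, hx⟩ := ih (i := i + 1) (by omega)
    have hd : d - j = i + 1 := by omega
    have hy' : ((fun D => ⁅F, D⁆)^[j + 1] G) y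
        = d.descFactorial (j + 1) • (x ^ i * y ^ ((j + 1) * m)) := by
      rw [Function.iterate_succ_apply', commutator_apply, hFy, map_zero, sub_zero, hy,
        map_nsmul, map_pow_succ_mul_pow hFx hFy, Nat.descFactorial_succ, hd, smul_smul]
      ring
    refine ⟨hy', ?_⟩
    rw [Function.iterate_succ_apply', commutator_apply, hx, hFx, map_neg, map_nsmul,
      map_pow_succ_mul_pow hFx hFy, leibniz_pow, hy', Nat.descFactorial_succ, hd]
    simp only [smul_eq_mul, nsmul_eq_mul]
    push_cast
    ring

theorem Derivation.iterate_lie_succ_apply_eq_zero (hFx : F x = y ^ m) (hFy : F y = 0)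
    (hGx : G x = 0) (hGy : G y = x ^ d) : ((fun D => ⁅F, D⁆)^[d + 1] G) y = 0 := by
  obtain ⟨hy, -⟩ := iterate_lie_apply hFx hFy hGx hGy (zero_add d)
  rw [Function.iterate_succ_apply', commutator_apply, hFy, map_zero, sub_zero, hy,
    pow_zero, one_mul, map_nsmul, leibniz_pow, hFy, smul_zero, smul_zero, smul_zero]

end

section
variable {k A : Type*} [Field k] [CharZero k] [CommRing A] [Algebra k A]
  {S : LieSubalgebra k (Derivation k A A)} {F G : Derivation k A A} {x y : A} {m d : ℕ}

theorem LieSubalgebra.exists_mem_apply_eq_pow_of_apply_eq_pow (hG : G ∈ S) (hGx : G x = 0)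
    (hGy : G y = x ^ d) (hF : F ∈ S) (hFx : F x = y ^ m) (hFy : F y = 0) (hm : m ≠ 0) :
    ∃ F' ∈ S, F' x = y ^ (d * m + (m - 1)) ∧ F' y = 0 := by
  set E := (fun D => ⁅F, D⁆)^[d + 1] G
  have hE : E ∈ S := Set.MapsTo.iterate (fun _ hD => S.lie_mem hF hD) (d + 1) hG
  obtain ⟨-, hEx⟩ := Derivation.iterate_lie_apply hFx hFy hGx hGy (zero_add d)
  have hN : (((d + 1) * m * d.descFactorial d : ℕ) : k) ≠ 0 := by
    simp [hm, Nat.descFactorial_self, Nat.factorial_ne_zero, Nat.cast_add_one_ne_zero]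
  refine ⟨-(((d + 1) * m * d.descFactorial d : ℕ) : k)⁻¹ • E, S.smul_mem _ hE, ?_, ?_⟩
  · rw [Derivation.smul_apply, hEx, ← Nat.cast_smul_eq_nsmul k, neg_smul, smul_neg, neg_neg,
      smul_smul, inv_mul_cancel₀ hN, one_smul, pow_zero, one_mul]
  · rw [Derivation.smul_apply, Derivation.iterate_lie_succ_apply_eq_zero hFx hFy hGx hGy,
      smul_zero]

theorem LieSubalgebra.exists_mem_apply_eq_pow_gt (hd : 2 ≤ d) (hG : G ∈ S) (hGx : G x = 0)
    (hGy : G y = x ^ d) (hF : F ∈ S) (hFx : F x = y ^ m) (hFy : F y = 0) (hm : m ≠ 0)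
    (n : ℕ) : ∃ F' ∈ S, ∃ m', n < m' ∧ F' x = y ^ m' ∧ F' y = 0 := by
  induction n with
  | zero => exact ⟨F, hF, m, Nat.pos_of_ne_zero hm, hFx, hFy⟩
  | succ n ih =>
    obtain ⟨F', hF', m', hnm', hF'x, hF'y⟩ := ih
    obtain ⟨F'', hF'', hF''x, hF''y⟩ :=
      exists_mem_apply_eq_pow_of_apply_eq_pow hG hGx hGy hF' hF'x hF'y (by omega)
    have : 2 * m' ≤ d * m' := Nat.mul_le_mul_right m' hd
    exact ⟨F'', hF'', _, by omega, hF''x, hF''y⟩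

end

theorem MvPolynomial.exists_le_restrictTotalDegree {R σ : Type*} [CommSemiring R]
    (W : Submodule R (MvPolynomial σ R)) [Module.Finite R W] :
    ∃ N, W ≤ restrictTotalDegree σ R N := by
  obtain ⟨s, rfl⟩ := Module.Finite.iff_fg.1 ‹_›
  exact ⟨s.sup totalDegree, Submodule.span_le.2 fun p hp =>
    (mem_restrictTotalDegree _ _ _).2 (Finset.le_sup hp)⟩

theorem MvPolynomial.not_finite_lieSubalgebra {k σ : Type*} [Field k] [CharZero k]
    {S : LieSubalgebra k (Derivation k (MvPolynomial σ k) (MvPolynomial σ k))}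
    {F G : Derivation k (MvPolynomial σ k) (MvPolynomial σ k)} {i j : σ} {c d : ℕ}
    (hc : c ≠ 0) (hd : 2 ≤ d) (hF : F ∈ S) (hG : G ∈ S) (hFx : F (X i) = X j ^ c)
    (hFy : F (X j) = 0) (hGx : G (X i) = 0) (hGy : G (X j) = X i ^ d) :
    ¬ Module.Finite k S := by
  intro
  let evalX : Derivation k (MvPolynomial σ k) (MvPolynomial σ k) →ₗ[k] MvPolynomial σ k :=
    { toFun := fun D => D (X i), map_add' := fun _ _ => rfl, map_smul' := fun _ _ => rfl }
  obtain ⟨N, hN⟩ := exists_le_restrictTotalDegree (S.toSubmodule.map evalX)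
  obtain ⟨F', hF', m, hNm, hF'x, -⟩ :=
    S.exists_mem_apply_eq_pow_gt hd hG hGx hGy hF hFx hFy hc N
  have := hN ⟨F', hF', hF'x⟩
  rw [mem_restrictTotalDegree, totalDegree_X_pow] at this
  omega

/-- For the derivations `∂₁ = y^c ∂/∂x` and `∂₂ = x^d ∂/∂y` of `k[x,y]` with
`c ≥ 1`, `d > 1`, the Lie algebra they generate is infinite dimensional; in
particular `ad(∂₁)^(d+1)(∂₂) = -c·(d+1)!·y^e ∂/∂x` where `e = (d+1)c - 1 > c`. -/
theorem stmt_9 {k : Type*} [Field k] [CharZero k] (c d : ℕ) (hc : 1 ≤ c) (hd : 1 < d)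
    (D₁ D₂ : Derivation k (MvPolynomial (Fin 2) k) (MvPolynomial (Fin 2) k))
    (h₁x : D₁ (X 0) = (X 1) ^ c) (h₁y : D₁ (X 1) = 0)
    (h₂x : D₂ (X 0) = 0) (h₂y : D₂ (X 1) = (X 0) ^ d) :
    ¬ Module.Finite k
        (LieSubalgebra.lieSpan k (Derivation k (MvPolynomial (Fin 2) k)
          (MvPolynomial (Fin 2) k)) {D₁, D₂}) ∧
    (d + 1) * c - 1 > c ∧
    ((fun D => ⁅D₁, D⁆)^[d + 1] D₂) (X 0)
        = -((c * Nat.factorial (d + 1)) • (X 1 : MvPolynomial (Fin 2) k) ^ ((d + 1) * c - 1)) ∧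
    ((fun D => ⁅D₁, D⁆)^[d + 1] D₂) (X 1) = 0 := by
  have hexp : (d + 1) * c - 1 = d * c + (c - 1) := by
    rw [add_mul, one_mul]; omega
  have : 2 * c ≤ d * c := Nat.mul_le_mul_right c hd
  obtain ⟨-, hx⟩ := Derivation.iterate_lie_apply h₁x h₁y h₂x h₂y (zero_add d)
  refine ⟨MvPolynomial.not_finite_lieSubalgebra (by omega) hd
      (LieSubalgebra.subset_lieSpan (by simp)) (LieSubalgebra.subset_lieSpan (by simp))
      h₁x h₁y h₂x h₂y, by omega, ?_,
    Derivation.iterate_lie_succ_apply_eq_zero h₁x h₁y h₂x h₂y⟩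
  rw [hx, hexp, pow_zero, one_mul, Nat.descFactorial_self, Nat.factorial_succ]
  ring
end

section
/- Let L be a finite-dimensional Lie algebra over a field of characteristic zero that decomposes as a direct sum of abelian subalgebras L = L_1 ⊕ ... ⊕ L_r satisfying [L_i, L_j] ⊆ L_j whenever i > j, and [L_r, L_r] = 0. Suppose moreover that for each pair i ≥ j there exists N with ad(L_i)^N (L_j) = 0 (meaning any N-fold iterated bracket with elements of L_i applied to an element of L_j vanishes). Then L is nilpotent. -/
/-!
For `a ∈ L_i`, `b ∈ L_j` with `j < i` we have `ad a * ad b = ad b * ad a + ad ⁅a, b⁆`, so the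
subspaces `ad(L_i)` of `End L` satisfy `ad(L_i) * ad(L_j) ≤ ad(L_j) * ad(L_i) ⊔ ad(L_j)`; each of
them is nilpotent, because `ad(L_i)^N` kills `L_j` for `j ≤ i` by hypothesis and `ad(L_i)^2` kills
`L_j` for `j > i` as `⁅L_i, L_j⁆ ⊆ L_i` is abelian.

For two nilpotent subspaces with `G * H ≤ H * G ⊔ H`, factors from `H` can be moved to the left
across the algebra `Q` generated by `G` and `H`. If `G^N = 0` this gives `Q * (G ⊔ H)^N ≤ H * Q`,
hence `(G ⊔ H)^(N * M) ≤ H^M * Q = 0`. Adding the `ad(L_i)` one at a time, `ad(L)` is a nilpotent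
subspace: all products of some fixed number of `ad x` vanish, which is nilpotency of `L`.
-/

attribute [local instance 100] LieRing.ofAssociativeRing

namespace Submodule

variable {R A : Type*} [CommSemiring R] [Semiring A] [Algebra R A]

theorem adjoin_union_mul_le_mul_adjoin {G H : Submodule R A} (hGH : G * H ≤ H * G ⊔ H) :
    Subalgebra.toSubmodule (Algebra.adjoin R (G ∪ H : Set A)) * H ≤
      H * Subalgebra.toSubmodule (Algebra.adjoin R (G ∪ H : Set A)) := by
  set Q := Subalgebra.toSubmodule (Algebra.adjoin R (G ∪ H : Set A))
  have hGQ : G ≤ Q := fun _ hx => Algebra.subset_adjoin (Or.inl hx)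
  have hHQ : H ≤ Q := fun _ hx => Algebra.subset_adjoin (Or.inr hx)
  have hHHQ : H ≤ H * Q := by
    simpa using mul_le_mul' (le_refl H) (one_le.mpr (Subalgebra.one_mem _))
  have hHQQ : H * Q * Q ≤ H * Q := by
    rw [mul_assoc, (Subalgebra.isIdempotentElem_toSubmodule _).eq]
  rw [mul_le]
  intro q hq h hh
  induction hq using Algebra.adjoin_induction generalizing h with
  | mem g hg =>
    rcases hg with hg | hg
    · exact (hGH.trans (sup_le (mul_le_mul' le_rfl hGQ) hHHQ)) (mul_mem_mul hg hh)
    · exact mul_le_mul' le_rfl hHQ (mul_mem_mul hg hh)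
  | algebraMap c =>
    rw [← Algebra.smul_def]
    exact hHHQ (smul_mem _ c hh)
  | add x y _ _ hx hy =>
    rw [add_mul]
    exact add_mem (hx h hh) (hy h hh)
  | mul x y _ _ hx hy =>
    rw [mul_assoc]
    refine Submodule.mul_induction_on (hy h hh) (fun h' hh' q' hq' => ?_) fun _ _ h₁ h₂ => ?_
    · rw [← mul_assoc]
      exact hHQQ (mul_mem_mul (hx h' hh') hq')
    · rw [mul_add]
      exact add_mem h₁ h₂

theorem isNilpotent_sup_of_mul_le {G H : Submodule R A} (hG : IsNilpotent G) (hH : IsNilpotent H)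
    (hGH : G * H ≤ H * G ⊔ H) : IsNilpotent (G ⊔ H) := by
  obtain ⟨N, hN⟩ := hG
  obtain ⟨M, hM⟩ := hH
  set Q := Subalgebra.toSubmodule (Algebra.adjoin R (G ∪ H : Set A))
  have hQH : Q * H ≤ H * Q := adjoin_union_mul_le_mul_adjoin hGH
  have hQQ : Q * Q = Q := (Subalgebra.isIdempotentElem_toSubmodule _).eq
  have h1Q : 1 ≤ Q := one_le.mpr (Subalgebra.one_mem _)
  have hGQ : G ≤ Q := fun _ hx => Algebra.subset_adjoin (Or.inl hx)
  have hQGQ : Q * G ≤ Q := (mul_le_mul' le_rfl hGQ).trans_eq hQQ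
  have hHQ : H ≤ Q := fun _ hx => Algebra.subset_adjoin (Or.inr hx)
  have hHQQ : H * Q ≤ Q := (mul_le_mul' hHQ le_rfl).trans_eq hQQ
  have hQGn : ∀ n, Q * G ^ n ≤ Q := fun n => by
    induction n with
    | zero => rw [pow_zero, mul_one]
    | succ n ih => rw [pow_succ, ← mul_assoc]; exact (mul_le_mul' ih le_rfl).trans hQGQ
  -- A word in `G` and `H` either consists of `G`s only or, moving its first `H` to the far left,
  -- lies in `H * Q`.
  have hQT : ∀ n, Q * (G ⊔ H) ^ n ≤ Q * G ^ n ⊔ H * Q := fun n => by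
    induction n with
    | zero => exact le_sup_left
    | succ n ih =>
      calc Q * (G ⊔ H) ^ (n + 1) ≤ (Q * G ^ n ⊔ H * Q) * (G ⊔ H) := by
            rw [pow_succ, ← mul_assoc]; exact mul_le_mul' ih le_rfl
        _ = Q * G ^ (n + 1) ⊔ H * (Q * G) ⊔ (Q * G ^ n * H ⊔ H * (Q * H)) := by
            simp only [sup_mul, mul_sup, pow_succ, mul_assoc]
        _ ≤ Q * G ^ (n + 1) ⊔ H * Q := by
            refine sup_le (sup_le le_sup_left ?_) (le_sup_of_le_right (sup_le ?_ ?_))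
            · exact le_sup_of_le_right (mul_le_mul' le_rfl hQGQ)
            · exact (mul_le_mul' (hQGn n) le_rfl).trans hQH
            · calc H * (Q * H) ≤ H * (H * Q) := mul_le_mul' le_rfl hQH
                _ ≤ H * Q := mul_le_mul' le_rfl hHQQ
  have hQTN : Q * (G ⊔ H) ^ N ≤ H * Q := by simpa [hN] using hQT N
  have hQTl : ∀ l, Q * (G ⊔ H) ^ (N * l) ≤ H ^ l * Q := fun l => by
    induction l with
    | zero => simp
    | succ l ih =>
      calc Q * (G ⊔ H) ^ (N * (l + 1)) = Q * (G ⊔ H) ^ (N * l) * (G ⊔ H) ^ N := by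
            rw [mul_add, mul_one, pow_add, mul_assoc]
        _ ≤ H ^ l * Q * (G ⊔ H) ^ N := mul_le_mul' ih le_rfl
        _ ≤ H ^ l * (H * Q) := by rw [mul_assoc]; exact mul_le_mul' le_rfl hQTN
        _ = H ^ (l + 1) * Q := by rw [pow_succ, mul_assoc]
  refine ⟨N * M, le_bot_iff.mp ?_⟩
  calc (G ⊔ H) ^ (N * M) ≤ Q * (G ⊔ H) ^ (N * M) := le_mul_of_one_le_left' h1Q
    _ ≤ ⊥ := by simpa [hM] using hQTl M

theorem isNilpotent_iSup_of_mul_le {ι : Type*} [LinearOrder ι] [Finite ι]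
    {G : ι → Submodule R A} (hG : ∀ i, IsNilpotent (G i))
    (hGG : ∀ i j, j < i → G i * G j ≤ G j * G i ⊔ G j) :
    IsNilpotent (⨆ i, G i) := by
  have := Fintype.ofFinite ι
  rw [← Finset.sup_univ_eq_iSup]
  induction (Finset.univ : Finset ι) using Finset.induction_on_max with
  | empty => exact ⟨1, by simp⟩
  | insert a s has ih =>
    rw [Finset.sup_insert]
    refine isNilpotent_sup_of_mul_le (hG a) ih ?_
    simp only [Finset.sup_eq_iSup, mul_iSup]
    exact iSup₂_le fun j hj => (hGG a j (has j hj)).trans <|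
      sup_le_sup (mul_le_mul' (le_iSup₂ (f := fun j _ => G j) j hj) le_rfl)
        (le_iSup₂ (f := fun j _ => G j) j hj)

end Submodule

namespace LieModule

variable {R L M : Type*} [CommRing R] [LieRing L] [LieAlgebra R L] [AddCommGroup M] [Module R M]
  [LieRingModule L M] [LieModule R L M]

theorem mem_ucs_of_forall_pow_range_toEnd {n : ℕ} {m : M}
    (h : ∀ T ∈ LinearMap.range (toEnd R L M).toLinearMap ^ n, T m = 0) :
    m ∈ (⊥ : LieSubmodule R L M).ucs n := by
  induction n generalizing m with
  | zero => simpa using h 1 (by rw [pow_zero]; exact Submodule.one_le.mp le_rfl)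
  | succ n ih =>
    rw [LieSubmodule.ucs_succ, LieSubmodule.mem_normalizer]
    intro x
    refine ih fun T hT => ?_
    rw [← toEnd_apply_apply R, ← Module.End.mul_apply]
    refine h _ ?_
    rw [pow_succ]
    exact Submodule.mul_mem_mul hT (LinearMap.mem_range_self _ x)

theorem isNilpotent_of_isNilpotent_range_toEnd
    (h : _root_.IsNilpotent (LinearMap.range (toEnd R L M).toLinearMap)) :
    IsNilpotent L M := by
  obtain ⟨n, hn⟩ := h
  refine (isNilpotent_iff_exists_ucs_eq_top R).mpr ⟨n, eq_top_iff.mpr fun m _ => ?_⟩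
  refine mem_ucs_of_forall_pow_range_toEnd fun T hT => ?_
  rw [hn, Submodule.zero_eq_bot, Submodule.mem_bot] at hT
  simp [hT]

variable (R M) in
def iterToEnd (g : ℕ → L) : ℕ → Module.End R M
  | 0 => 1
  | n + 1 => toEnd R L M (g n) * iterToEnd g n

theorem iterToEnd_apply (g : ℕ → L) (n : ℕ) (m : M) :
    iterToEnd R M g n m = Nat.rec (motive := fun _ => M) m (fun i acc => ⁅g i, acc⁆) n := by
  induction n with
  | zero => rfl
  | succ n ih => simp [iterToEnd, ih]

theorem iterToEnd_succ_cons (g : ℕ → L) (a : L) (n : ℕ) :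
    iterToEnd R M (fun | 0 => a | i + 1 => g i) (n + 1) =
      iterToEnd R M g n * toEnd R L M a := by
  induction n with
  | zero => simp [iterToEnd]
  | succ n ih => rw [iterToEnd, ih, iterToEnd, mul_assoc]

variable (R M) in
def iterKer (P : Submodule R L) (n : ℕ) : Submodule R M :=
  ⨅ (g : ℕ → L) (_ : ∀ i, g i ∈ P), LinearMap.ker (iterToEnd R M g n)

variable {P : Submodule R L}

theorem mem_iterKer {n : ℕ} {m : M} :
    m ∈ iterKer R M P n ↔ ∀ g : ℕ → L, (∀ i, g i ∈ P) → iterToEnd R M g n m = 0 := by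
  simp [iterKer]

theorem iterKer_zero : iterKer R M P 0 = ⊥ :=
  eq_bot_iff.mpr fun m hm => by simpa [iterToEnd] using mem_iterKer.mp hm 0 fun _ => P.zero_mem

theorem iterKer_mono : Monotone (iterKer R M P) :=
  monotone_nat_of_le_succ fun n m hm => mem_iterKer.mpr fun g hg => by
    rw [iterToEnd, Module.End.mul_apply, mem_iterKer.mp hm g hg, map_zero]

theorem lie_mem_iterKer {a : L} (ha : a ∈ P) {n : ℕ} {m : M} (hm : m ∈ iterKer R M P (n + 1)) :
    ⁅a, m⁆ ∈ iterKer R M P n := by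
  refine mem_iterKer.mpr fun g hg => ?_
  rw [← toEnd_apply_apply R, ← Module.End.mul_apply, ← iterToEnd_succ_cons]
  exact mem_iterKer.mp hm _ fun | 0 => ha | i + 1 => hg i

theorem iterKer_add_le_comap {n : ℕ} {T : Module.End R M}
    (hT : T ∈ P.map (toEnd R L M).toLinearMap ^ n) (k : ℕ) :
    iterKer R M P (k + n) ≤ (iterKer R M P k).comap T := by
  induction hT using Submodule.pow_induction_on_right' generalizing k with
  | algebraMap r =>
    intro m hm
    simpa [Algebra.algebraMap_eq_smul_one] using Submodule.smul_mem _ r hm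
  | add T₁ T₂ _ _ _ h₁ h₂ =>
    exact fun m hm => Submodule.mem_comap.mpr (add_mem (h₁ k hm) (h₂ k hm))
  | mul_mem i T _ ih S hS =>
    obtain ⟨a, ha, rfl⟩ := hS
    exact fun m hm => ih k (lie_mem_iterKer ha hm)

theorem isNilpotent_map_toEnd_of_iterKer_eq_top {n : ℕ} (h : iterKer R M P n = ⊤) :
    _root_.IsNilpotent (P.map (toEnd R L M).toLinearMap) := by
  refine ⟨n, (Submodule.eq_bot_iff _).mpr fun T hT => LinearMap.ext fun m => ?_⟩
  have := iterKer_add_le_comap hT 0 (by simp [h] : m ∈ iterKer R M P (0 + n))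
  simpa [iterKer_zero] using this

theorem map_toEnd_mul_le {P Q : Submodule R L} (h : ∀ x ∈ P, ∀ y ∈ Q, ⁅x, y⁆ ∈ Q) :
    P.map (toEnd R L M).toLinearMap * Q.map (toEnd R L M).toLinearMap ≤
      Q.map (toEnd R L M).toLinearMap * P.map (toEnd R L M).toLinearMap ⊔
        Q.map (toEnd R L M).toLinearMap := by
  rw [Submodule.mul_le]
  rintro _ ⟨a, ha, rfl⟩ _ ⟨b, hb, rfl⟩
  have hab : toEnd R L M a * toEnd R L M b =
      toEnd R L M b * toEnd R L M a + toEnd R L M ⁅a, b⁆ := by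
    rw [LieHom.map_lie, Ring.lie_def, add_sub_cancel]
  rw [LieHom.coe_toLinearMap, hab]
  exact add_mem (Submodule.mem_sup_left (Submodule.mul_mem_mul ⟨b, hb, rfl⟩ ⟨a, ha, rfl⟩))
    (Submodule.mem_sup_right ⟨_, h a ha b hb, rfl⟩)

end LieModule

open LieModule Submodule in
theorem stmt_13_general {k L : Type*} [Field k] [LieRing L] [LieAlgebra k L]
    (r : ℕ) (Lp : Fin r → LieSubalgebra k L)
    (hdirect : DirectSum.IsInternal (fun i => (Lp i).toSubmodule))
    (habel : ∀ i, ∀ x ∈ Lp i, ∀ y ∈ Lp i, ⁅x, y⁆ = 0)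
    (htri : ∀ i j : Fin r, j < i → ∀ x ∈ Lp i, ∀ y ∈ Lp j, ⁅x, y⁆ ∈ Lp j)
    (had : ∀ i j : Fin r, j ≤ i → ∃ N : ℕ, ∀ (g : ℕ → L), (∀ n, g n ∈ Lp i) →
      ∀ y ∈ Lp j,
        (Nat.rec (motive := fun _ => L) y (fun n acc => ⁅g n, acc⁆) N) = 0) :
    LieRing.IsNilpotent L := by
  have hspan := hdirect.submodule_iSup_eq_top
  have hkill : ∀ i j, ∃ N, (Lp j).toSubmodule ≤ iterKer k L (Lp i).toSubmodule N := by
    intro i j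
    rcases le_or_gt j i with hji | hij
    · obtain ⟨N, hN⟩ := had i j hji
      refine ⟨N, fun y hy => mem_iterKer.mpr fun g hg => ?_⟩
      rw [iterToEnd_apply]
      exact hN g hg y hy
    · refine ⟨2, fun y hy => mem_iterKer.mpr fun g hg => ?_⟩
      have hgy : ⁅g 0, y⁆ ∈ Lp i := by
        rw [← lie_skew]
        exact neg_mem (htri j i hij y hy (g 0) (hg 0))
      simpa [iterToEnd] using habel i _ (hg 1) _ hgy
  have hnil : ∀ i, IsNilpotent ((Lp i).toSubmodule.map (toEnd k L L).toLinearMap) := by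
    intro i
    choose N hN using hkill i
    obtain ⟨n, hn⟩ := Finite.exists_le N
    refine isNilpotent_map_toEnd_of_iterKer_eq_top (n := n) (eq_top_iff.mpr ?_)
    rw [← hspan]
    exact iSup_le fun j => (hN j).trans (iterKer_mono (hn j))
  apply isNilpotent_of_isNilpotent_range_toEnd (R := k)
  rw [LinearMap.range_eq_map, ← hspan, Submodule.map_iSup]
  exact isNilpotent_iSup_of_mul_le hnil fun i j hij => map_toEnd_mul_le (htri i j hij)

/-- Let `L` be a finite-dimensional Lie algebra over a field of characteristic zero
that is an internal direct sum of abelian subalgebras `L 0, …, L (r-1)` with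
`[L i, L j] ⊆ L j` for `i > j`, and such that for every `i ≥ j` some power of
`ad` of elements of `L i` annihilates `L j`. Then `L` is nilpotent. -/
theorem stmt_13 {k L : Type*} [Field k] [CharZero k] [LieRing L] [LieAlgebra k L]
    [FiniteDimensional k L]
    (r : ℕ) (Lp : Fin r → LieSubalgebra k L)
    (hdirect : DirectSum.IsInternal (fun i => (Lp i).toSubmodule))
    (habel : ∀ i, ∀ x ∈ Lp i, ∀ y ∈ Lp i, ⁅x, y⁆ = 0)
    (htri : ∀ i j : Fin r, j < i → ∀ x ∈ Lp i, ∀ y ∈ Lp j, ⁅x, y⁆ ∈ Lp j)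
    (had : ∀ i j : Fin r, j ≤ i → ∃ N : ℕ, ∀ (g : ℕ → L), (∀ n, g n ∈ Lp i) →
      ∀ y ∈ Lp j,
        (Nat.rec (motive := fun _ => L) y (fun n acc => ⁅g n, acc⁆) N) = 0) :
    LieRing.IsNilpotent L :=
  stmt_13_general r Lp hdirect habel htri had
end

section
/- If a group G acts faithfully on an infinite set X so that for every m the action is m-transitive, and H is a nontrivial normal subgroup of G, then H also acts m-transitively on X for every m. -/
/-!
For a finite set `S ⊆ X` write `H_S = H ⊓ fixingSubgroup G S`. It suffices that every `H_S` is
transitive on `X \ S`. This holds as soon as `H_S ≠ 1`: conjugating a nontrivial element of `H_S`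
by elements of `G_S`, which is highly transitive on `X \ S`, moves any `x` to any `y`.
Nontriviality of `H_S` follows by induction on `S`. If `H_T ≠ 1` but `H_{T ∪ {a}} = 1`, then `H_T`
acts simply transitively on `X \ T`, and `k ↦ k • a` identifies the action of `G_{T ∪ {a}}` on
`X \ T` with its conjugation action on `H_T`, which is by automorphisms. An automorphism fixing
`k₁` and `k₂` fixes `k₁ k₂`, contradicting the 3-transitivity of `G_{T ∪ {a}}` on `X \ (T ∪ {a})`.
-/

open MulAction Function

section

variable {G X : Type*} [Group G] [MulAction G X]

def IsPretransitiveOnCompl (K : Subgroup G) (S : Finset X) : Prop :=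
  ∀ x ∉ S, ∀ y ∉ S, ∃ k ∈ K ⊓ fixingSubgroup G (S : Set X), k • x = y

theorem exists_smul_eq_of_embedding
    (hht : ∀ (m : ℕ) (f g : Fin m ↪ X), ∃ γ : G, ∀ i : Fin m, γ • f i = g i)
    {ι : Type*} [Finite ι] (f g : ι ↪ X) : ∃ γ : G, ∀ i, γ • f i = g i := by
  let e := (Finite.equivFin ι).symm.toEmbedding
  obtain ⟨γ, hγ⟩ := hht _ (e.trans f) (e.trans g)
  exact ⟨γ, fun i => by simpa [e] using hγ (Finite.equivFin ι i)⟩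

theorem isPretransitiveOnCompl_top
    (hht : ∀ (m : ℕ) (f g : Fin m ↪ X), ∃ γ : G, ∀ i : Fin m, γ • f i = g i)
    (S : Finset X) : IsPretransitiveOnCompl (⊤ : Subgroup G) S := by
  intro x hx y hy
  obtain ⟨γ, hγ⟩ := exists_smul_eq_of_embedding hht
    ((Embedding.subtype (· ∈ S)).optionElim x (by simpa))
    ((Embedding.subtype (· ∈ S)).optionElim y (by simpa))
  refine ⟨γ, Subgroup.mem_inf.2 ⟨trivial, ?_⟩, hγ none⟩
  exact (mem_fixingSubgroup_iff G).2 fun s hs => hγ (some ⟨s, hs⟩)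

theorem smul_notMem_of_mem_fixingSubgroup {S : Set X} {g : G} (hg : g ∈ fixingSubgroup G S)
    {x : X} (hx : x ∉ S) : g • x ∉ S := fun hgx =>
  hx (smul_left_cancel g ((mem_fixingSubgroup_iff G).1 hg _ hgx) ▸ hgx)

theorem conj_mem_inf_fixingSubgroup {H : Subgroup G} [hH : H.Normal] {S : Set X} {g k : G}
    (hg : g ∈ fixingSubgroup G S) (hk : k ∈ H ⊓ fixingSubgroup G S) :
    g * k * g⁻¹ ∈ H ⊓ fixingSubgroup G S :=
  Subgroup.mem_inf.2 ⟨hH.conj_mem k hk.1 g, mul_mem (mul_mem hg hk.2) (inv_mem hg)⟩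

theorem injOn_smul_of_inf_stabilizer_eq_bot {K : Subgroup G} {a : X}
    (h : K ⊓ stabilizer G a = ⊥) : Set.InjOn (· • a) (K : Set G) := by
  intro k hk k' hk' hkk'
  have : k'⁻¹ * k ∈ K ⊓ stabilizer G a :=
    Subgroup.mem_inf.2 ⟨mul_mem (inv_mem hk') hk, by simp_all [mul_smul]⟩
  rw [h, Subgroup.mem_bot, inv_mul_eq_one] at this
  exact this.symm

theorem commute_of_injOn_smul {K : Subgroup G} {a : X} (hinj : Set.InjOn (· • a) (K : Set G))
    {g k : G} (hk : k ∈ K) (hgk : g * k * g⁻¹ ∈ K) (hga : g • a = a)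
    (hgka : g • k • a = k • a) : Commute g k := by
  refine mul_inv_eq_iff_eq_mul.1 (hinj hgk hk ?_)
  calc (g * k * g⁻¹) • a = g • k • g⁻¹ • a := by simp only [mul_smul]
    _ = k • a := by rw [inv_smul_eq_iff.2 hga.symm, hgka]

theorem smul_smul_smul_eq_of_injOn_smul {K : Subgroup G} {a : X}
    (hinj : Set.InjOn (· • a) (K : Set G)) {g k₁ k₂ : G} (hk₁ : k₁ ∈ K) (hk₂ : k₂ ∈ K)
    (hgK : ∀ k ∈ K, g * k * g⁻¹ ∈ K) (hga : g • a = a) (hgk₁ : g • k₁ • a = k₁ • a)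
    (hgk₂ : g • k₂ • a = k₂ • a) : g • k₁ • k₂ • a = k₁ • k₂ • a := by
  have hcomm := (commute_of_injOn_smul hinj hk₁ (hgK k₁ hk₁) hga hgk₁).mul_right
    (commute_of_injOn_smul hinj hk₂ (hgK k₂ hk₂) hga hgk₂)
  calc g • k₁ • k₂ • a = (g * (k₁ * k₂)) • a := by simp only [mul_smul]
    _ = k₁ • k₂ • g • a := by rw [hcomm.eq]; simp only [mul_smul]
    _ = k₁ • k₂ • a := by rw [hga]

theorem IsPretransitiveOnCompl.of_inf_fixingSubgroup_ne_bot [FaithfulSMul G X]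
    (hG : ∀ S : Finset X, IsPretransitiveOnCompl (⊤ : Subgroup G) S)
    {H : Subgroup G} [H.Normal] {S : Finset X} (hne : H ⊓ fixingSubgroup G (S : Set X) ≠ ⊥) :
    IsPretransitiveOnCompl H S := by
  classical
  intro x hx y hy
  obtain ⟨⟨h, hh⟩, hh1⟩ := Subgroup.ne_bot_iff_exists_ne_one.1 hne
  obtain ⟨a, ha⟩ : ∃ a : X, h • a ≠ a := by
    by_contra! hfix
    exact hh1 (Subtype.ext (eq_of_smul_eq_smul (α := X) fun a => by simp [hfix a]))
  have haS : a ∉ S := fun haS => ha ((mem_fixingSubgroup_iff G).1 hh.2 a haS)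
  obtain ⟨g₁, hg₁, rfl⟩ := hG S a haS x hx
  have hh' : g₁ * h * g₁⁻¹ ∈ H ⊓ fixingSubgroup G (S : Set X) :=
    conj_mem_inf_fixingSubgroup hg₁.2 hh
  have hh'x : (g₁ * h * g₁⁻¹) • g₁ • a = g₁ • h • a := by simp [mul_smul]
  rcases eq_or_ne y (g₁ • a) with rfl | hyx
  · exact ⟨1, one_mem _, one_smul G _⟩
  have hhaS : g₁ • h • a ∉ insert (g₁ • a) S := by
    simpa [ha, hh'x] using smul_notMem_of_mem_fixingSubgroup hh'.2 hx
  obtain ⟨g₂, hg₂, rfl⟩ := hG (insert (g₁ • a) S) _ hhaS y (by simp [hyx, hy])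
  have hg₂ := (mem_fixingSubgroup_iff G).1 hg₂.2
  refine ⟨g₂ * (g₁ * h * g₁⁻¹) * g₂⁻¹, conj_mem_inf_fixingSubgroup ?_ hh', ?_⟩
  · exact (mem_fixingSubgroup_iff G).2 fun s hs => hg₂ s (by simp [hs])
  · rw [mul_smul, mul_smul, inv_smul_eq_iff.2 (hg₂ (g₁ • a) (by simp)).symm, hh'x]

theorem inf_fixingSubgroup_insert_ne_bot [DecidableEq X] [Infinite X]
    (hG : ∀ S : Finset X, IsPretransitiveOnCompl (⊤ : Subgroup G) S)
    {H : Subgroup G} [H.Normal] {T : Finset X} {a : X} (ha : a ∉ T)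
    (hT : IsPretransitiveOnCompl H T) (hne : H ⊓ fixingSubgroup G (T : Set X) ≠ ⊥) :
    H ⊓ fixingSubgroup G ((insert a T : Finset X) : Set X) ≠ ⊥ := by
  intro hbot
  have hinj : Set.InjOn (· • a) ((H ⊓ fixingSubgroup G (T : Set X) : Subgroup G) : Set G) := by
    refine injOn_smul_of_inf_stabilizer_eq_bot (eq_bot_iff.2 fun k hk => hbot ▸ ?_)
    obtain ⟨⟨hkH, hkT⟩, hka⟩ := hk
    refine Subgroup.mem_inf.2 ⟨hkH, ?_⟩
    simpa [SubMulAction.mem_fixingSubgroup_insert_iff] using ⟨hka, hkT⟩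
  obtain ⟨⟨k₁, hk₁⟩, hk₁1⟩ := Subgroup.ne_bot_iff_exists_ne_one.1 hne
  obtain ⟨c, hc⟩ := Infinite.exists_notMem_finset (insert a (insert (k₁⁻¹ • a) T))
  simp only [Finset.mem_insert, not_or] at hc
  obtain ⟨hca, hck₁a, hcT⟩ := hc
  obtain ⟨k₂, hk₂, rfl⟩ := hT a ha c hcT
  have hk₁c : k₁ • k₂ • a ≠ k₂ • a := fun h => hk₁1 (Subtype.ext (mul_eq_right.1
    (hinj (mul_mem hk₁ hk₂) hk₂ (by simpa [mul_smul] using h))))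
  set F := insert a (insert (k₁ • a) (insert (k₂ • a) T))
  have hk₁cF : k₁ • k₂ • a ∉ F := by
    simp only [F, Finset.mem_insert, not_or]
    exact ⟨fun h => hck₁a (eq_inv_smul_iff.2 h), fun h => hca (smul_left_cancel k₁ h), hk₁c,
      smul_notMem_of_mem_fixingSubgroup hk₁.2 hcT⟩
  obtain ⟨b, hb⟩ := Infinite.exists_notMem_finset (insert (k₁ • k₂ • a) F)
  obtain ⟨g, hg, rfl⟩ := hG F _ hk₁cF b (fun h => hb (Finset.mem_insert_of_mem h))
  have hgF := (mem_fixingSubgroup_iff G).1 hg.2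
  have hgT : g ∈ fixingSubgroup G (T : Set X) :=
    (mem_fixingSubgroup_iff G).2 fun s hs => hgF s (by simp [F, hs])
  refine hb (Finset.mem_insert.2 (Or.inl ?_))
  exact smul_smul_smul_eq_of_injOn_smul hinj hk₁ hk₂
    (fun k hk => conj_mem_inf_fixingSubgroup hgT hk) (hgF a (by simp [F]))
    (hgF _ (by simp [F])) (hgF _ (by simp [F]))

theorem inf_fixingSubgroup_ne_bot [Infinite X] [FaithfulSMul G X]
    (hG : ∀ S : Finset X, IsPretransitiveOnCompl (⊤ : Subgroup G) S)
    {H : Subgroup G} [H.Normal] (hH : H ≠ ⊥) (S : Finset X) :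
    H ⊓ fixingSubgroup G (S : Set X) ≠ ⊥ := by
  classical
  induction S using Finset.induction_on with
  | empty => simpa using hH
  | insert a T ha ih =>
    exact inf_fixingSubgroup_insert_ne_bot hG ha (.of_inf_fixingSubgroup_ne_bot hG ih) ih

theorem exists_mem_smul_eq_of_isPretransitiveOnCompl {K : Subgroup G}
    (hK : ∀ S : Finset X, IsPretransitiveOnCompl K S) :
    ∀ (m : ℕ) (f g : Fin m ↪ X), ∃ k ∈ K, ∀ i, k • f i = g i := by
  classical
  intro m
  induction m with
  | zero => exact fun _ _ => ⟨1, one_mem K, finZeroElim⟩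
  | succ m ih =>
    intro f g
    obtain ⟨k₁, hk₁, hk₁f⟩ := ih (Fin.castSuccEmb.trans f) (Fin.castSuccEmb.trans g)
    set S := Finset.univ.map (Fin.castSuccEmb.trans g)
    have hxS : k₁ • f (Fin.last m) ∉ S := by
      simp only [S, Finset.mem_map, Finset.mem_univ, true_and, not_exists]
      intro i hi
      exact Fin.castSucc_ne_last i (f.injective (smul_left_cancel k₁ ((hk₁f i).trans hi)))
    have hyS : g (Fin.last m) ∉ S := by
      simp [S, Fin.castSucc_ne_last]
    obtain ⟨k₂, hk₂, hk₂x⟩ := hK S _ hxS _ hyS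
    refine ⟨k₂ * k₁, mul_mem hk₂.1 hk₁, Fin.lastCases ?_ fun i => ?_⟩
    · rw [mul_smul, hk₂x]
    · rw [mul_smul, show k₁ • f i.castSucc = g i.castSucc from hk₁f i]
      exact (mem_fixingSubgroup_iff G).1 hk₂.2 _ (by simp [S])

end

/-- If `G` acts faithfully and `m`-transitively on an infinite set `X` for every `m`,
then every nontrivial normal subgroup `H` of `G` also acts `m`-transitively on `X`
for every `m`. -/
theorem stmt_16 {G X : Type*} [Group G] [MulAction G X] [FaithfulSMul G X] [Infinite X]
    (hht : ∀ (m : ℕ) (f g : Fin m ↪ X), ∃ γ : G, ∀ i : Fin m, γ • f i = g i)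
    (H : Subgroup G) [H.Normal] (hH : H ≠ ⊥) :
    ∀ (m : ℕ) (f g : Fin m ↪ X), ∃ h ∈ H, ∀ i : Fin m, h • f i = g i :=
  have hG := isPretransitiveOnCompl_top hht
  exists_mem_smul_eq_of_isPretransitiveOnCompl fun S =>
    .of_inf_fixingSubgroup_ne_bot hG (inf_fixingSubgroup_ne_bot hG hH S)
end

section
/- A virtually solvable group cannot act faithfully and highly transitively on an infinite set X. More precisely, if G acts faithfully and m-transitively on an infinite set for all m, then G contains no finite-index normal solvable subgroup other than allowed by triviality — i.e., G is not virtually solvable. -/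
/-!
The normal core of a solvable subgroup of finite index is a normal solvable subgroup, nontrivial
because `G`, being transitive on an infinite set, is infinite. The last nontrivial term of its
derived series is characteristic in it, hence a nontrivial abelian normal subgroup `A` of `G`.

By 2-transitivity, an element `c ∈ A` with a fixed point `p` fixes everything: if `c` moved `s`
to `t`, conjugating `c` by some `g` fixing `s` and sending `t` to `p` would give `b ∈ A` with
`b • s = p = b • t`, because `c` and `b` commute. By 4-transitivity, `A` does contain such an
element `c ≠ 1`: for `1 ≠ a ∈ A` moving `x` to `y`, and `q` with `r = a • q ≠ q`, conjugate `a` by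
some `g` fixing `x`, `q`, `r` and moving `y`; then `a⁻¹ (g a g⁻¹)` fixes `q` but moves `x`.
-/

open MulAction

namespace MulAction

variable {G X : Type*} [Group G] [MulAction G X]

theorem exists_smul_eq_of_injective {n : ℕ} [IsMultiplyPretransitive G X n] {x y : Fin n → X}
    (hx : x.Injective) (hy : y.Injective) : ∃ g : G, ∀ i, g • x i = y i := by
  obtain ⟨g, hg⟩ := exists_smul_eq G (⟨x, hx⟩ : Fin n ↪ X) ⟨y, hy⟩
  exact ⟨g, fun i => DFunLike.congr_fun hg i⟩

theorem smul_eq_self_of_mem_of_smul_eq_self [IsMultiplyPretransitive G X 2] {A : Subgroup G}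
    [A.Normal] (hA : ⁅A, A⁆ = ⊥) {c : G} (hc : c ∈ A) {p : X} (hp : c • p = p) (s : X) :
    c • s = s := by
  by_contra hs
  have hps : p ≠ s := by rintro rfl; exact hs hp
  obtain ⟨g, hgs, hgt⟩ := is_two_pretransitive_iff.mp ‹_› (Ne.symm hs) hps.symm
  have hbA : g * c * g⁻¹ ∈ A := ‹A.Normal›.conj_mem c hc g
  have hbs : (g * c * g⁻¹) • s = p := by
    rw [mul_smul, mul_smul, inv_smul_eq_iff.mpr hgs.symm, hgt]
  have hcb : c * (g * c * g⁻¹) = g * c * g⁻¹ * c :=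
    Subgroup.mem_centralizer_iff.mp (Subgroup.commutator_eq_bot_iff_le_centralizer.mp hA hbA) c hc
  have hbt : (g * c * g⁻¹) • c • s = p := by
    rw [← mul_smul, ← hcb, mul_smul, hbs, hp]
  exact hs (smul_left_cancel _ (hbt.trans hbs.symm))

variable (X) in
theorem eq_bot_of_normal_of_commutator_eq_bot [IsMultiplyPretransitive G X 4] [FaithfulSMul G X]
    [Infinite X] {A : Subgroup G} [A.Normal] (hA : ⁅A, A⁆ = ⊥) : A = ⊥ := by
  classical
  have : IsMultiplyPretransitive G X 2 := isMultiplyPretransitive_of_le' (n := 4) (by norm_num)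
    (by simp)
  by_contra hA_ne
  obtain ⟨⟨a, haA⟩, ha⟩ := Subgroup.ne_bot_iff_exists_ne_one.mp hA_ne
  obtain ⟨x, hx⟩ : ∃ x : X, a • x ≠ x := by
    by_contra! h
    refine ha (Subtype.ext (eq_of_smul_eq_smul (α := X) fun x => ?_))
    rw [h x, OneMemClass.coe_one, one_smul]
  have hfree (q : X) : a • q ≠ q := fun hq =>
    hx (smul_eq_self_of_mem_of_smul_eq_self hA haA hq x)
  obtain ⟨q, hq⟩ := Infinite.exists_notMem_finset ({x, a • x, a⁻¹ • x} : Finset X)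
  simp only [Finset.mem_insert, Finset.mem_singleton, not_or] at hq
  obtain ⟨hqx, hqax, hqa⟩ := hq
  have hrx : a • q ≠ x := fun h => hqa (by rw [← h, inv_smul_smul])
  have hry : a • q ≠ a • x := fun h => hqx (smul_left_cancel a h)
  obtain ⟨z, hz⟩ := Infinite.exists_notMem_finset ({x, a • x, q, a • q} : Finset X)
  simp only [Finset.mem_insert, Finset.mem_singleton, not_or] at hz
  obtain ⟨hzx, hzy, hzq, hzr⟩ := hz
  obtain ⟨g, hg⟩ := exists_smul_eq_of_injective (G := G)
    (x := ![x, a • x, q, a • q]) (y := ![x, z, q, a • q])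
    (by intro i j; fin_cases i <;> fin_cases j <;> simp [*, hx.symm, Ne.symm hqx, Ne.symm hqax,
      (hfree q).symm, hrx.symm, hry.symm])
    (by intro i j; fin_cases i <;> fin_cases j <;> simp [*, Ne.symm hzx, Ne.symm hqx,
      Ne.symm hzq, Ne.symm hzr, (hfree q).symm, hrx.symm])
  have hgx : g • x = x := hg 0
  have hgy : g • a • x = z := hg 1
  have hgq : g • q = q := hg 2
  have hgr : g • a • q = a • q := hg 3
  have hcA : a⁻¹ * (g * a * g⁻¹) ∈ A := A.mul_mem (A.inv_mem haA) (‹A.Normal›.conj_mem a haA g)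
  have hcq : (a⁻¹ * (g * a * g⁻¹)) • q = q := by
    rw [mul_smul, mul_smul, mul_smul, inv_smul_eq_iff.mpr hgq.symm, hgr, inv_smul_smul]
  have hcx : (a⁻¹ * (g * a * g⁻¹)) • x ≠ x := by
    rw [mul_smul, mul_smul, mul_smul, inv_smul_eq_iff.mpr hgx.symm, hgy, Ne, inv_smul_eq_iff]
    exact hzy
  exact hcx (smul_eq_self_of_mem_of_smul_eq_self hA hcA hcq x)

end MulAction

theorem Group.IsSolvable.exists_characteristic_ne_bot_commutator_eq_bot {N : Type*} [Group N]
    [Group.IsSolvable N] [Nontrivial N] :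
    ∃ K : Subgroup N, K.Characteristic ∧ K ≠ ⊥ ∧ ⁅K, K⁆ = ⊥ := by
  have hex : ∃ n, derivedSeries N n = ⊥ := IsSolvable.solvable
  classical
  set m := Nat.find hex
  have hm0 : m ≠ 0 := fun h => by
    simpa [derivedSeries_zero] using (h ▸ Nat.find_spec hex : derivedSeries N 0 = ⊥)
  refine ⟨derivedSeries N (m - 1), inferInstance, Nat.find_min hex (by omega), ?_⟩
  rw [← derivedSeries_succ, Nat.sub_add_cancel (Nat.one_le_iff_ne_zero.mpr hm0)]
  exact Nat.find_spec hex

theorem Subgroup.exists_normal_ne_bot_commutator_eq_bot {G : Type*} [Group G] [Infinite G]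
    {S : Subgroup G} (hS : S.index ≠ 0) [Group.IsSolvable S] :
    ∃ A : Subgroup G, A.Normal ∧ A ≠ ⊥ ∧ ⁅A, A⁆ = ⊥ := by
  have : S.FiniteIndex := ⟨hS⟩
  set N := S.normalCore
  have : Group.IsSolvable N :=
    Group.isSolvable_of_isSolvable_injective (inclusion_injective S.normalCore_le)
  have : Nontrivial N := by
    refine (nontrivial_iff_ne_bot N).mpr fun h => FiniteIndex.index_ne_zero (H := N) ?_
    rw [h, index_bot, Nat.card_eq_zero_of_infinite]
  obtain ⟨K, hK, hK_ne, hKK⟩ :=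
    Group.IsSolvable.exists_characteristic_ne_bot_commutator_eq_bot (N := N)
  refine ⟨K.map N.subtype, inferInstance, ?_, ?_⟩
  · rwa [Ne, map_eq_bot_iff_of_injective _ N.subtype_injective]
  · rw [← map_commutator, hKK, map_bot]

/-- A group acting faithfully and `m`-transitively for every `m` on an infinite set
is not virtually solvable: it has no solvable subgroup of finite index. -/
theorem stmt_19 {G X : Type*} [Group G] [MulAction G X] [FaithfulSMul G X] [Infinite X]
    (hht : ∀ (m : ℕ) (f g : Fin m ↪ X), ∃ γ : G, ∀ i : Fin m, γ • f i = g i) :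
    ¬ ∃ S : Subgroup G, S.index ≠ 0 ∧ IsSolvable S := by
  rintro ⟨S, hS, hS_solv⟩
  have htrans (n : ℕ) : IsMultiplyPretransitive G X n :=
    ⟨fun f g => (hht n f g).imp fun γ hγ => Function.Embedding.ext hγ⟩
  have : IsPretransitive G X := is_one_pretransitive_iff.mp (htrans 1)
  obtain ⟨x⟩ := ‹Infinite X›.nonempty
  have : Infinite G := Infinite.of_surjective _ (surjective_smul G x)
  have : Group.IsSolvable S := hS_solv
  obtain ⟨A, hA, hA_ne, hAA⟩ := S.exists_normal_ne_bot_commutator_eq_bot hS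
  have := htrans 4
  exact hA_ne (eq_bot_of_normal_of_commutator_eq_bot X hAA)
end
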